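/- Let A ∈ ℝ^{n×n}, B ∈ ℝ^{n×p}, C ∈ ℝ^{m×n}, D ∈ ℝ^{m×p}, and let M ∈ ℝ^{k×k}, H ∈ ℝ^{k×m}, T ∈ ℝ^{k×n} satisfy the Sylvester equation T A − M T = H C. Let x : ℝ → ℝⁿ, u : ℝ → ℝᵖ, v : ℝ → ℝᵏ be such that for every t: x has derivative A x(t) + B u(t) at t, and v has derivative M v(t) + H (C x(t) + D u(t)) + (T B − H D) u(t) at t. Then the error e(t) := v(t) − T x(t) satisfies e(t) = exp((t − s) M) e(s) for all real s ≤ t. -/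

import Mathlib

/-!
Differentiating `v - T x` and using the Sylvester equation `T A = M T + H C`, the input terms
cancel and the error solves the autonomous linear equation `ė = M e`. For any solution of
`ḟ = L f`, the function `r ↦ exp ((t - r) L) (f r)` has derivative zero, so its values at `r = t`
and `r = s` agree. Matrices act on `ι → 𝕂` through the continuous algebra isomorphism with
continuous endomorphisms, which commutes with `exp`.
-/

open NormedSpace

section LinearODE

variable {𝕂 E : Type*} [RCLike 𝕂] [NormedAddCommGroup E] [NormedSpace 𝕂 E] [CompleteSpace E]

theorem hasDerivAt_exp_sub_smul_apply (L : E →L[𝕂] E) {f : 𝕂 → E} {f' : E} (s : 𝕂) {t : 𝕂}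
    (hf : HasDerivAt f f' t) :
    HasDerivAt (fun r => exp ((s - r) • L) (f r)) (exp ((s - t) • L) (f' - L (f t))) t := by
  have hexp : HasDerivAt (fun r : 𝕂 => exp ((s - r) • L)) (-(L * exp ((s - t) • L))) t := by
    simpa [Function.comp_def] using
      (hasDerivAt_exp_smul_const' L (s - t)).scomp t ((hasDerivAt_id t).const_sub s)
  convert hexp.clm_apply hf using 1
  have hcomm : Commute L (exp ((s - t) • L)) := ((Commute.refl L).smul_right _).exp_right
  rw [neg_apply, hcomm.eq, mul_apply_eq_comp, map_sub]
  abel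

theorem eq_exp_smul_apply_of_hasDerivAt {L : E →L[𝕂] E} {f : 𝕂 → E}
    (hf : ∀ t, HasDerivAt f (L (f t)) t) (s t : 𝕂) :
    f t = exp ((t - s) • L) (f s) := by
  have hderiv (r : 𝕂) : HasDerivAt (fun r => exp ((t - r) • L) (f r)) 0 r := by
    simpa using hasDerivAt_exp_sub_smul_apply L t (hf r)
  simpa using is_const_of_deriv_eq_zero (fun r => (hderiv r).differentiableAt)
    (fun r => (hderiv r).deriv) t s

end LinearODE

namespace Matrix

variable {𝕂 ι : Type*} [RCLike 𝕂] [Fintype ι] [DecidableEq ι]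

attribute [local instance] Matrix.linftyOpNormedRing Matrix.linftyOpNormedAlgebra

theorem exp_mulVec (M : Matrix ι ι 𝕂) (w : ι → 𝕂) :
    exp M *ᵥ w = exp (LinearMap.toContinuousLinearMap (toLin' M)) w := by
  let Φ : Matrix ι ι 𝕂 ≃ₐ[𝕂] ((ι → 𝕂) →L[𝕂] (ι → 𝕂)) :=
    toLinAlgEquiv'.trans (Module.End.toContinuousLinearMap _)
  exact congr($(map_exp Φ (LinearMap.continuous_of_finiteDimensional Φ.toLinearMap) M) w)

theorem eq_exp_smul_mulVec_of_hasDerivAt (M : Matrix ι ι 𝕂) {f : 𝕂 → ι → 𝕂}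
    (hf : ∀ t, HasDerivAt f (M *ᵥ f t) t) (s t : 𝕂) :
    f t = exp ((t - s) • M) *ᵥ f s := by
  rw [exp_mulVec, map_smul]
  exact eq_exp_smul_apply_of_hasDerivAt (L := LinearMap.toContinuousLinearMap (toLin' M)) hf s t

end Matrix

open Matrix

theorem HasDerivAt.matrix_mulVec {𝕂 ι κ : Type*} [NontriviallyNormedField 𝕂] [CompleteSpace 𝕂]
    [Fintype ι] [Fintype κ] (T : Matrix κ ι 𝕂) {x : 𝕂 → ι → 𝕂} {x' : ι → 𝕂} {t : 𝕂}
    (hx : HasDerivAt x x' t) : HasDerivAt (fun r => T *ᵥ x r) (T *ᵥ x') t :=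
  (LinearMap.toContinuousLinearMap T.mulVecLin).hasFDerivAt.comp_hasDerivAt t hx

theorem hasDerivAt_sub_mulVec_of_sylvester {𝕂 ιx ιu ιy ιv : Type*} [NontriviallyNormedField 𝕂]
    [CompleteSpace 𝕂] [Fintype ιx] [Fintype ιu] [Fintype ιy] [Fintype ιv]
    {A : Matrix ιx ιx 𝕂} {B : Matrix ιx ιu 𝕂} {C : Matrix ιy ιx 𝕂} {D : Matrix ιy ιu 𝕂}
    {M : Matrix ιv ιv 𝕂} {H : Matrix ιv ιy 𝕂} {T : Matrix ιv ιx 𝕂}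
    (hSyl : T * A - M * T = H * C) {x : 𝕂 → ιx → 𝕂} {u : 𝕂 → ιu → 𝕂} {v : 𝕂 → ιv → 𝕂} {t : 𝕂}
    (hx : HasDerivAt x (A *ᵥ x t + B *ᵥ u t) t)
    (hv : HasDerivAt v (M *ᵥ v t + H *ᵥ (C *ᵥ x t + D *ᵥ u t) + (T * B - H * D) *ᵥ u t) t) :
    HasDerivAt (fun r => v r - T *ᵥ x r) (M *ᵥ (v t - T *ᵥ x t)) t := by
  refine (hv.sub (hx.matrix_mulVec T)).congr_deriv ?_
  simp only [mulVec_add, mulVec_sub, sub_mulVec, mulVec_mulVec]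
  rw [← hSyl, sub_mulVec]
  abel

/-- If `T A − M T = H C` (Sylvester equation), `x` solves
`ẋ = A x + B u` and `v` solves `v̇ = M v + H (C x + D u) + (T B − H D) u`, then the
error `e(t) = v(t) − T x(t)` satisfies `e(t) = exp((t − s) M) e(s)` for all `s ≤ t`. -/
theorem stmt12 {n p m k : ℕ}
    (A : Matrix (Fin n) (Fin n) ℝ) (B : Matrix (Fin n) (Fin p) ℝ)
    (C : Matrix (Fin m) (Fin n) ℝ) (D : Matrix (Fin m) (Fin p) ℝ)
    (M : Matrix (Fin k) (Fin k) ℝ) (H : Matrix (Fin k) (Fin m) ℝ)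
    (T : Matrix (Fin k) (Fin n) ℝ)
    (hSyl : T * A - M * T = H * C)
    (x : ℝ → Fin n → ℝ) (u : ℝ → Fin p → ℝ) (v : ℝ → Fin k → ℝ)
    (hx : ∀ t : ℝ, HasDerivAt x (A.mulVec (x t) + B.mulVec (u t)) t)
    (hv : ∀ t : ℝ, HasDerivAt v
      (M.mulVec (v t) + H.mulVec (C.mulVec (x t) + D.mulVec (u t)) +
        (T * B - H * D).mulVec (u t)) t) :
    ∀ s t : ℝ, s ≤ t →
      v t - T.mulVec (x t) =
        (NormedSpace.exp ((t - s) • M)).mulVec (v s - T.mulVec (x s)) := fun s t _ =>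
  M.eq_exp_smul_mulVec_of_hasDerivAt
    (fun r => hasDerivAt_sub_mulVec_of_sylvester hSyl (hx r) (hv r)) s t
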